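/- Let ∇ ⊂ ℝ⁴ be defined by 0 ≤ x ≤ 1, 0 ≤ y ≤ 1, 0 ≤ z ≤ 1, 0 ≤ w ≤ 1, z+w-x-y ≥ 0, 1+x+y-z-w ≥ 0. For every positive integer n, the number of lattice points in n∇ equals C(n+4,4) + 5·C(n+3,4) + 5·C(n+2,4) = (11n⁴ + 50n³ + 85n² + 70n + 24)/24. -/

import Mathlib

open Pointwise

def nabla : Set (ℝ × ℝ × ℝ × ℝ) :=
  {p : ℝ × ℝ × ℝ × ℝ |
    0 ≤ p.1 ∧
    p.1 ≤ 1 ∧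
    0 ≤ p.2.1 ∧
    p.2.1 ≤ 1 ∧
    0 ≤ p.2.2.1 ∧
    p.2.2.1 ≤ 1 ∧
    0 ≤ p.2.2.2 ∧
    p.2.2.2 ≤ 1 ∧
    0 ≤ p.2.2.1 + p.2.2.2 - p.1 - p.2.1 ∧
    0 ≤ 1 + p.1 + p.2.1 - p.2.2.1 - p.2.2.2}

/-!
Reflecting the last two coordinates, `(a, b, c, d) ↦ (a, b, n - c, n - d)`, identifies the lattice
points of `n • nabla` with the points of the cube `{0, …, n}⁴` whose coordinate sum lies in
`[n, 2n]`. The points of the cube with sum `≤ 2n` are counted by inclusion–exclusion inside the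
simplex `{sum ≤ 2n}`: at most one coordinate can exceed `n`, and lowering it by `n + 1` leaves a
point of sum `< n`. With the stars-and-bars count `C(m + k, k)` of the simplex `{sum ≤ m}` in
`ℕᵏ`, this gives `C(2n + 4, 4) - 5 C(n + 3, 4)`, a quartic polynomial in `n` that agrees with the
stated one.
-/

open Finset

def cube (k n : ℕ) : Finset (Fin k → ℕ) :=
  Fintype.piFinset fun _ => range (n + 1)

@[simp]
lemma mem_cube {k n : ℕ} {v : Fin k → ℕ} : v ∈ cube k n ↔ ∀ i, v i ≤ n := by
  simp [cube]

lemma apply_le_sum {k : ℕ} (v : Fin k → ℕ) (i : Fin k) : v i ≤ ∑ j, v j :=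
  single_le_sum (fun _ _ => Nat.zero_le _) (mem_univ i)

lemma card_filter_cube_succ (k N : ℕ) (P : ℕ → Prop) [DecidablePred P] :
    #{v ∈ cube (k + 1) N | P (∑ i, v i)} =
      ∑ x ∈ range (N + 1), #{w ∈ cube k N | P (x + ∑ i, w i)} := by
  have h := filter_piFinset_eq_map_consEquiv (fun _ : Fin (k + 1) => range (N + 1))
    (fun _ => True)
  simp only [filter_true] at h
  rw [cube, h, filter_map, card_map, card_filter, sum_product]
  refine sum_congr rfl fun x _ => ?_
  simp only [card_filter, Function.comp_apply, Equiv.coe_toEmbedding, Fin.consEquiv_apply,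
    Fin.sum_cons]
  rfl

lemma filter_cube_sum_le_of_le {k m N : ℕ} (h : m ≤ N) :
    ({v ∈ cube k N | ∑ i, v i ≤ m} : Finset _) = {v ∈ cube k m | ∑ i, v i ≤ m} := by
  ext v
  simp only [mem_filter, mem_cube]
  exact ⟨fun ⟨_, hs⟩ => ⟨fun i => (apply_le_sum v i).trans hs, hs⟩,
    fun ⟨hv, hs⟩ => ⟨fun i => (hv i).trans h, hs⟩⟩

theorem card_filter_cube_sum_le (k m : ℕ) :
    #{v ∈ cube k m | ∑ i, v i ≤ m} = (m + k).choose k := by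
  induction k generalizing m with
  | zero => simp [cube]
  | succ k ih =>
    rw [card_filter_cube_succ k m (· ≤ m)]
    calc ∑ x ∈ range (m + 1), #{w ∈ cube k m | x + ∑ i, w i ≤ m}
        = ∑ x ∈ range (m + 1), (m - x + k).choose k := by
          refine sum_congr rfl fun x hx => ?_
          have hx : x ≤ m := Nat.lt_succ_iff.mp (mem_range.mp hx)
          rw [← ih, ← filter_cube_sum_le_of_le (Nat.sub_le m x)]
          exact congrArg card (filter_congr fun w _ => by omega)
      _ = ∑ i ∈ range (m + 1), (i + k).choose k := by
          rw [← sum_range_reflect]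
          refine sum_congr rfl fun i hi => ?_
          rw [Nat.add_sub_cancel, Nat.sub_sub_self (Nat.lt_succ_iff.mp (mem_range.mp hi))]
      _ = (m + (k + 1)).choose (k + 1) := by rw [Nat.sum_range_add_choose, add_assoc]

theorem card_filter_cube_sum_lt (k : ℕ) {m N : ℕ} (h : m ≤ N + 1) :
    #{v ∈ cube (k + 1) N | ∑ i, v i < m} = (m + k).choose (k + 1) := by
  cases m with
  | zero => simp
  | succ m =>
    simp only [Nat.lt_succ_iff]
    rw [filter_cube_sum_le_of_le (by omega), card_filter_cube_sum_le, add_right_comm m 1 k,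
      add_assoc]

lemma card_filter_cube_sum_le_lt_apply {k : ℕ} (n : ℕ) (i : Fin k) :
    #{v ∈ cube k (2 * n) | ∑ j, v j ≤ 2 * n ∧ n < v i} =
      #{w ∈ cube k (2 * n) | ∑ j, w j < n} := by
  have sum_add_single (w : Fin k → ℕ) :
      ∑ j, (w + Pi.single i (n + 1) : Fin k → ℕ) j = ∑ j, w j + (n + 1) := by
    simp [sum_add_distrib]
  have single_le {v : Fin k → ℕ} (hv : n < v i) : Pi.single i (n + 1) ≤ v := fun j => by
    rcases eq_or_ne j i with rfl | h <;> simp [*]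
  refine card_nbij' (· - Pi.single i (n + 1)) (· + Pi.single i (n + 1)) ?_ ?_ ?_ ?_
  · intro v hv
    simp only [mem_coe, mem_filter, mem_cube] at hv ⊢
    have h_sum := sum_add_single (v - Pi.single i (n + 1))
    rw [tsub_add_cancel_of_le (single_le hv.2.2)] at h_sum
    exact ⟨fun j => (Nat.sub_le _ _).trans (hv.1 j), by omega⟩
  · intro w hw
    simp only [mem_coe, mem_filter, mem_cube] at hw ⊢
    refine ⟨fun j => ?_, by rw [sum_add_single]; omega,
      by simp only [Pi.add_apply, Pi.single_eq_same]; omega⟩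
    have := apply_le_sum (w + Pi.single i (n + 1)) j
    rw [sum_add_single] at this
    omega
  · intro v hv
    simp only [mem_coe, mem_filter, mem_cube] at hv
    exact tsub_add_cancel_of_le (single_le hv.2.2)
  · intro w _
    exact add_tsub_cancel_right w _

theorem card_filter_cube_sum_le_two_mul (k n : ℕ) :
    #{v ∈ cube k n | ∑ i, v i ≤ 2 * n} + k * #{w ∈ cube k (2 * n) | ∑ i, w i < n} =
      #{v ∈ cube k (2 * n) | ∑ i, v i ≤ 2 * n} := by
  set F := ({v ∈ cube k (2 * n) | ∑ i, v i ≤ 2 * n} : Finset _)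
  set A : Fin k → Finset (Fin k → ℕ) :=
    fun i => {v ∈ cube k (2 * n) | ∑ j, v j ≤ 2 * n ∧ n < v i}
  have h_small : ({v ∈ F | ∀ i, v i ≤ n} : Finset _) = {v ∈ cube k n | ∑ i, v i ≤ 2 * n} := by
    ext v
    simp only [F, mem_filter, mem_cube]
    exact ⟨fun ⟨⟨_, hs⟩, hv⟩ => ⟨hv, hs⟩,
      fun ⟨hv, hs⟩ => ⟨⟨fun i => (hv i).trans (by omega), hs⟩, hv⟩⟩
  have h_large : ({v ∈ F | ¬ ∀ i, v i ≤ n} : Finset _) = univ.biUnion A := by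
    ext v
    simp only [F, A, mem_filter, mem_cube, mem_biUnion, mem_univ, true_and, not_forall, not_le]
    tauto
  have h_disj : Set.PairwiseDisjoint (↑(univ : Finset (Fin k))) A := by
    intro i _ j _ hij
    refine disjoint_left.mpr fun v hi hj => ?_
    simp only [A, mem_filter] at hi hj
    have : v i + v j ≤ ∑ l, v l := by
      rw [← sum_pair hij]
      exact sum_le_sum_of_subset (subset_univ _)
    omega
  rw [← h_small, ← card_filter_add_card_filter_not (fun v : Fin k → ℕ => ∀ i, v i ≤ n) (s := F),
    h_large, card_biUnion h_disj]
  simp [A, card_filter_cube_sum_le_lt_apply]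

theorem card_filter_cube_sum_mem_Icc (k n : ℕ) :
    #{v ∈ cube (k + 1) n | n ≤ ∑ i, v i ∧ ∑ i, v i ≤ 2 * n} + (k + 2) * (n + k).choose (k + 1) =
      (2 * n + (k + 1)).choose (k + 1) := by
  have h_split := card_filter_add_card_filter_not (fun v : Fin (k + 1) → ℕ => n ≤ ∑ i, v i)
    (s := {v ∈ cube (k + 1) n | ∑ i, v i ≤ 2 * n})
  have h_high : ({v ∈ cube (k + 1) n | ∑ i, v i ≤ 2 * n ∧ n ≤ ∑ i, v i} : Finset _) =
      {v ∈ cube (k + 1) n | n ≤ ∑ i, v i ∧ ∑ i, v i ≤ 2 * n} :=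
    filter_congr fun _ _ => and_comm
  have h_low : ({v ∈ cube (k + 1) n | ∑ i, v i ≤ 2 * n ∧ ¬n ≤ ∑ i, v i} : Finset _) =
      {v ∈ cube (k + 1) n | ∑ i, v i < n} :=
    filter_congr fun _ _ => by omega
  rw [filter_filter, filter_filter, h_high, h_low, card_filter_cube_sum_lt k (by omega)] at h_split
  have h_incl_excl := card_filter_cube_sum_le_two_mul (k + 1) n
  rw [card_filter_cube_sum_lt k (by omega), card_filter_cube_sum_le] at h_incl_excl
  linarith

-- `nabla` with the constant `1` replaced by `t`; `InScaledNabla 1 p` is `p ∈ nabla` by `rfl`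
def InScaledNabla (t : ℝ) (p : ℝ × ℝ × ℝ × ℝ) : Prop :=
  0 ≤ p.1 ∧ p.1 ≤ t ∧ 0 ≤ p.2.1 ∧ p.2.1 ≤ t ∧ 0 ≤ p.2.2.1 ∧ p.2.2.1 ≤ t ∧ 0 ≤ p.2.2.2 ∧
    p.2.2.2 ≤ t ∧ 0 ≤ p.2.2.1 + p.2.2.2 - p.1 - p.2.1 ∧ 0 ≤ t + p.1 + p.2.1 - p.2.2.1 - p.2.2.2

lemma InScaledNabla.smul {s t : ℝ} {p : ℝ × ℝ × ℝ × ℝ} (hs : 0 ≤ s) (hp : InScaledNabla t p) :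
    InScaledNabla (s * t) (s • p) := by
  obtain ⟨a, b, c, d⟩ := p
  obtain ⟨h₁, h₂, h₃, h₄, h₅, h₆, h₇, h₈, h₉, h₁₀⟩ := hp
  simp only [InScaledNabla, Prod.smul_mk, smul_eq_mul]
  refine ⟨?_, ?_, ?_, ?_, ?_, ?_, ?_, ?_, ?_, ?_⟩ <;>
    linarith [mul_nonneg hs h₁, mul_nonneg hs h₃, mul_nonneg hs h₅, mul_nonneg hs h₇,
      mul_nonneg hs (sub_nonneg.2 h₂), mul_nonneg hs (sub_nonneg.2 h₄),
      mul_nonneg hs (sub_nonneg.2 h₆), mul_nonneg hs (sub_nonneg.2 h₈),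
      mul_nonneg hs h₉, mul_nonneg hs h₁₀]

lemma mem_smul_nabla_iff {r : ℝ} (hr : 0 ≤ r) {p : ℝ × ℝ × ℝ × ℝ} :
    p ∈ r • nabla ↔ InScaledNabla r p := by
  constructor
  · rintro ⟨q, hq, rfl⟩
    simpa using InScaledNabla.smul hr hq
  · intro hp
    rcases hr.eq_or_lt with rfl | hr
    · obtain ⟨a, b, c, d⟩ := p
      obtain ⟨h₁, h₂, h₃, h₄, h₅, h₆, h₇, h₈, -⟩ := hp
      rw [Set.zero_smul_set ⟨0, by simp [nabla]⟩]
      simp only [Set.mem_zero, Prod.mk_eq_zero]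
      exact ⟨by linarith, by linarith, by linarith, by linarith⟩
    · refine ⟨r⁻¹ • p, ?_, smul_inv_smul₀ hr.ne' p⟩
      have h := InScaledNabla.smul (inv_nonneg.2 hr.le) hp
      rwa [inv_mul_cancel₀ hr.ne'] at h

lemma intCast_mem_smul_nabla_iff (n : ℕ) (a b c d : ℤ) :
    ((a : ℝ), (b : ℝ), (c : ℝ), (d : ℝ)) ∈ (n : ℝ) • nabla ↔
      0 ≤ a ∧ a ≤ n ∧ 0 ≤ b ∧ b ≤ n ∧ 0 ≤ c ∧ c ≤ n ∧ 0 ≤ d ∧ d ≤ n ∧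
        0 ≤ c + d - a - b ∧ 0 ≤ n + a + b - c - d := by
  rw [mem_smul_nabla_iff (Nat.cast_nonneg n), InScaledNabla]
  dsimp only
  norm_cast

lemma intPoints_smul_nabla_eq (n : ℕ) :
    {v : ℤ × ℤ × ℤ × ℤ | ((v.1 : ℝ), (v.2.1 : ℝ), (v.2.2.1 : ℝ), (v.2.2.2 : ℝ)) ∈ (n : ℝ) • nabla} =
      ({w ∈ cube 4 n | n ≤ ∑ i, w i ∧ ∑ i, w i ≤ 2 * n}.image fun w =>
        ((w 0 : ℤ), (w 1 : ℤ), (n : ℤ) - w 2, (n : ℤ) - w 3) : Set (ℤ × ℤ × ℤ × ℤ)) := by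
  ext ⟨a, b, c, d⟩
  rw [Set.mem_ofPred_eq, intCast_mem_smul_nabla_iff, coe_image, Set.mem_image]
  simp only [mem_coe, mem_filter, mem_cube, Fin.sum_univ_four, Prod.mk.injEq]
  constructor
  · intro h
    refine ⟨![a.toNat, b.toNat, (n - c).toNat, (n - d).toNat], ⟨fun i => ?_, ?_⟩, ?_⟩
    · fin_cases i <;>
        simp only [Fin.zero_eta, Fin.mk_one, Fin.reduceFinMk, Fin.isValue, Matrix.cons_val] <;>
        omega
    all_goals
      simp only [Fin.isValue, Matrix.cons_val_zero, Matrix.cons_val_one, Matrix.cons_val]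
      omega
  · rintro ⟨w, ⟨hw, hs⟩, rfl, rfl, rfl, rfl⟩
    have := hw 0; have := hw 1; have := hw 2; have := hw 3
    omega

lemma ncard_intPoints_smul_nabla (n : ℕ) :
    {v : ℤ × ℤ × ℤ × ℤ |
        ((v.1 : ℝ), (v.2.1 : ℝ), (v.2.2.1 : ℝ), (v.2.2.2 : ℝ)) ∈ (n : ℝ) • nabla}.ncard =
      #{w ∈ cube 4 n | n ≤ ∑ i, w i ∧ ∑ i, w i ≤ 2 * n} := by
  rw [intPoints_smul_nabla_eq, Set.ncard_coe_finset]
  refine card_image_of_injective _ fun w w' h => funext fun i => ?_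
  simp only [Prod.mk.injEq] at h
  fin_cases i <;> simp only [Fin.zero_eta, Fin.mk_one, Fin.reduceFinMk] <;> omega

lemma cast_choose_four (m : ℕ) :
    (m.choose 4 : ℚ) = m * (m - 1) * (m - 2) * (m - 3) / 24 := by
  rw [Nat.cast_choose_eq_descPochhammer_div]
  simp [descPochhammer_succ_right, Nat.factorial]

lemma choose_two_mul_add_four (n : ℕ) :
    (2 * n + 4).choose 4 = (n + 4).choose 4 + 10 * (n + 3).choose 4 + 5 * (n + 2).choose 4 := by
  suffices h : ((2 * n + 4).choose 4 : ℚ) =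
      (n + 4).choose 4 + 10 * (n + 3).choose 4 + 5 * (n + 2).choose 4 by
    exact_mod_cast h
  simp only [cast_choose_four, Nat.cast_add, Nat.cast_mul, Nat.cast_ofNat]
  ring

theorem stmt17_general (n : ℕ) :
    {v : ℤ × ℤ × ℤ × ℤ | (((v.1 : ℝ), (v.2.1 : ℝ), (v.2.2.1 : ℝ), (v.2.2.2 : ℝ)) : ℝ × ℝ × ℝ × ℝ) ∈ (n : ℝ) • nabla}.ncard
        = Nat.choose (n + 4) 4 + 5 * Nat.choose (n + 3) 4 + 5 * Nat.choose (n + 2) 4 ∧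
      ((Nat.choose (n + 4) 4 + 5 * Nat.choose (n + 3) 4 + 5 * Nat.choose (n + 2) 4 : ℚ))
        = (11 * (n : ℚ) ^ 4 + 50 * (n : ℚ) ^ 3 + 85 * (n : ℚ) ^ 2 + 70 * (n : ℚ) ^ 1 + 24) / 24 := by
  have h_count : #{w ∈ cube 4 n | n ≤ ∑ i, w i ∧ ∑ i, w i ≤ 2 * n} + 5 * (n + 3).choose 4 =
      (2 * n + 4).choose 4 :=
    card_filter_cube_sum_mem_Icc 3 n
  refine ⟨by rw [ncard_intPoints_smul_nabla]; linarith [choose_two_mul_add_four n], ?_⟩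
  simp only [cast_choose_four, Nat.cast_add, Nat.cast_ofNat]
  ring

theorem stmt17 (n : ℕ) (hn : 0 < n) :
    {v : ℤ × ℤ × ℤ × ℤ | (((v.1 : ℝ), (v.2.1 : ℝ), (v.2.2.1 : ℝ), (v.2.2.2 : ℝ)) : ℝ × ℝ × ℝ × ℝ) ∈ (n : ℝ) • nabla}.ncard
        = Nat.choose (n + 4) 4 + 5 * Nat.choose (n + 3) 4 + 5 * Nat.choose (n + 2) 4 ∧
      ((Nat.choose (n + 4) 4 + 5 * Nat.choose (n + 3) 4 + 5 * Nat.choose (n + 2) 4 : ℚ))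
        = (11 * (n : ℚ) ^ 4 + 50 * (n : ℚ) ^ 3 + 85 * (n : ℚ) ^ 2 + 70 * (n : ℚ) ^ 1 + 24) / 24 :=
  stmt17_general n
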